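/- Let H and H' be discretely valued hyperfields whose absolute values take some value other than 0 and 1 and whose norms are positive (equivalently, neither is a field), and let f : H → H' be an isomorphism of hyperfields. Then |f(x)| = |x|^{(log θ_{H'})/(log θ_H)} for all x ∈ H; in particular, if π ∈ H has |π| = θ_H then |f(π)| = θ_{H'}. -/

import Mathlib

/-- A (Krasner) valued hyperfield: a hyperfield with a multivalued addition,
single-valued multiplication, an absolute value, the induced distance `dist`,
and the norm `rho`. -/
structure ValuedHyperfield where
  carrier : Type
  add : carrier → carrier → Set carrier
  mul : carrier → carrier → carrier
  zero : carrier
  one : carrier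
  neg : carrier → carrier
  abs : carrier → ℝ
  dist : carrier → carrier → ℝ
  rho : ℝ
  add_comm : ∀ x y, add x y = add y x
  add_assoc : ∀ x y z, (⋃ t ∈ add x y, add t z) = ⋃ t ∈ add y z, add x t
  add_zero : ∀ x, add x zero = {x}
  neg_mem : ∀ x, zero ∈ add x (neg x)
  neg_unique : ∀ x y, zero ∈ add x y → y = neg x
  reverse : ∀ x y z, x ∈ add y (neg z) ↔ y ∈ add x z
  mul_comm : ∀ x y, mul x y = mul y x
  mul_assoc : ∀ x y z, mul (mul x y) z = mul x (mul y z)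
  mul_one : ∀ x, mul x one = x
  one_ne_zero : one ≠ zero
  mul_inv : ∀ x, x ≠ zero → ∃ y, mul x y = one
  distrib : ∀ x y z, (fun t => mul t z) '' add x y ⊆ add (mul x z) (mul y z)
  abs_nonneg : ∀ x, 0 ≤ abs x
  abs_eq_zero_iff : ∀ x, abs x = 0 ↔ x = zero
  abs_mul : ∀ x y, abs (mul x y) = abs x * abs y
  abs_add_le : ∀ x y z, z ∈ add x y → abs z ≤ max (abs x) (abs y)
  abs_add_unique : ∀ x y, zero ∉ add x y →
    ∀ z w, z ∈ add x y → w ∈ add x y → abs z = abs w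
  dist_self : ∀ x, dist x x = 0
  dist_eq : ∀ x y z, x ≠ y → z ∈ add x (neg y) → dist x y = abs z
  rho_nonneg : 0 ≤ rho
  rho_ball : ∀ x y, (∃ w, add x y = {z | dist z w ≤ rho * max (abs x) (abs y)}) ∨
      (∃ w, add x y = {z | dist z w < rho * max (abs x) (abs y)})
  rho_min : ∀ r : ℝ, 0 ≤ r →
      (∀ x y, (∃ w, add x y = {z | dist z w ≤ r * max (abs x) (abs y)}) ∨
        (∃ w, add x y = {z | dist z w < r * max (abs x) (abs y)})) → rho ≤ r

/-- The valuation is discrete: every nonzero value of the absolute value is an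
isolated point of the image of the absolute value. -/
def ValuedHyperfield.Discrete (V : ValuedHyperfield) : Prop :=
  ∀ r ∈ Set.range V.abs, r ≠ 0 →
    ∃ ε > (0 : ℝ), ∀ s ∈ Set.range V.abs, |s - r| < ε → s = r

/-- `θ` is the largest absolute value which is strictly less than 1, attained
at some nonzero element. -/
def ValuedHyperfield.IsTheta (V : ValuedHyperfield) (θ : ℝ) : Prop :=
  (∃ x, x ≠ V.zero ∧ V.abs x = θ) ∧ θ < 1 ∧
    ∀ x, x ≠ V.zero → V.abs x < 1 → V.abs x ≤ θ

/-- An isomorphism of the underlying hyperfields: a multiplicative and additive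
bijection (not required to preserve the absolute values). -/
def IsHyperfieldIso (V W : ValuedHyperfield) (f : V.carrier → W.carrier) : Prop :=
  Function.Bijective f ∧ (∀ x y, f (V.mul x y) = W.mul (f x) (f y)) ∧
    ∀ x y, f '' V.add x y = W.add (f x) (f y)


/-!
If `H` is not a field, `1 + (-1)` is a ball of positive radius containing `0`, hence centred
at `0`; since all values are powers of `θ`, it equals `{z | |z| ≤ σ}` for its largest value
`σ > 0`, and then `x + (-x) = x · (1 + (-1)) = {z | |z| ≤ σ |x|}`. Thus `|x| ≤ |y|` iff
`x + (-x) ⊆ y + (-y)`, a condition a hyperfield isomorphism preserves. So `f` preserves the order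
of absolute values, maps elements of value `θ` to elements of value `θ'`, and by
multiplicativity sends values `θ ^ n` to `θ' ^ n`.
-/

namespace ValuedHyperfield

lemma abs_zero (V : ValuedHyperfield) : V.abs V.zero = 0 := (V.abs_eq_zero_iff V.zero).2 rfl

lemma abs_pos (V : ValuedHyperfield) {x : V.carrier} (hx : x ≠ V.zero) : 0 < V.abs x :=
  (V.abs_nonneg x).lt_of_ne fun h => hx ((V.abs_eq_zero_iff x).1 h.symm)

lemma IsTheta.pos {V : ValuedHyperfield} {θ : ℝ} (hθ : V.IsTheta θ) : 0 < θ := by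
  obtain ⟨x, hx, rfl⟩ := hθ.1
  exact V.abs_pos hx

variable (V : ValuedHyperfield)

lemma abs_one : V.abs V.one = 1 := by
  have h := V.abs_mul V.one V.one
  rw [V.mul_one] at h
  have h0 : 0 < V.abs V.one := V.abs_pos V.one_ne_zero
  nlinarith

lemma mul_zero' (x : V.carrier) : V.mul x V.zero = V.zero := by
  rw [← V.abs_eq_zero_iff, V.abs_mul, V.abs_zero, mul_zero]

lemma one_mul' (x : V.carrier) : V.mul V.one x = x := by
  rw [V.mul_comm, V.mul_one]

lemma neg_zero' : V.neg V.zero = V.zero :=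
  (V.neg_unique V.zero V.zero (by rw [V.add_zero]; rfl)).symm

lemma neg_neg' (x : V.carrier) : V.neg (V.neg x) = x :=
  (V.neg_unique (V.neg x) x (by rw [V.add_comm]; exact V.neg_mem x)).symm

lemma neg_one_mul (x : V.carrier) : V.mul (V.neg V.one) x = V.neg x := by
  refine V.neg_unique x _ ?_
  have h : V.mul V.zero x ∈ V.add (V.mul V.one x) (V.mul (V.neg V.one) x) :=
    V.distrib V.one (V.neg V.one) x ⟨V.zero, V.neg_mem V.one, rfl⟩
  rwa [V.mul_comm V.zero, V.mul_zero', V.one_mul'] at h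

lemma abs_neg_one : V.abs (V.neg V.one) = 1 := by
  have h := V.abs_mul (V.neg V.one) (V.neg V.one)
  rw [V.neg_one_mul, V.neg_neg', V.abs_one] at h
  nlinarith [V.abs_nonneg (V.neg V.one)]

lemma abs_neg (x : V.carrier) : V.abs (V.neg x) = V.abs x := by
  rw [← V.neg_one_mul, V.abs_mul, V.abs_neg_one, _root_.one_mul]

lemma exists_mul_eq_one {x : V.carrier} (hx : x ≠ V.zero) :
    ∃ x', V.mul x x' = V.one ∧ V.abs x' = (V.abs x)⁻¹ := by
  obtain ⟨x', hx'⟩ := V.mul_inv x hx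
  refine ⟨x', hx', eq_inv_of_mul_eq_one_right ?_⟩
  rw [← V.abs_mul, hx', V.abs_one]

lemma exists_abs_eq_zpow {x : V.carrier} (hx : x ≠ V.zero) (n : ℤ) :
    ∃ y, V.abs y = V.abs x ^ n := by
  induction n using Int.induction_on with
  | zero => exact ⟨V.one, by rw [V.abs_one, zpow_zero]⟩
  | succ n ih =>
    obtain ⟨y, hy⟩ := ih
    exact ⟨V.mul y x, by rw [V.abs_mul, hy, zpow_add_one₀ (V.abs_pos hx).ne']⟩
  | pred n ih =>
    obtain ⟨y, hy⟩ := ih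
    obtain ⟨x', -, hx'⟩ := V.exists_mul_eq_one hx
    exact ⟨V.mul y x', by rw [V.abs_mul, hy, hx', zpow_sub_one₀ (V.abs_pos hx).ne']⟩

lemma dist_zero_right (x : V.carrier) : V.dist x V.zero = V.abs x := by
  by_cases hx : x = V.zero
  · rw [hx, V.dist_self, V.abs_zero]
  · exact V.dist_eq x V.zero x hx (by rw [V.neg_zero', V.add_zero]; rfl)

lemma dist_zero_left (x : V.carrier) : V.dist V.zero x = V.abs x := by
  by_cases hx : x = V.zero
  · rw [hx, V.dist_self, V.abs_zero]
  · rw [V.dist_eq V.zero x (V.neg x) (Ne.symm hx) (by rw [V.add_comm, V.add_zero]; rfl),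
      V.abs_neg]

lemma add_nonempty (hρ : 0 < V.rho) (x y : V.carrier) : (V.add x y).Nonempty := by
  rcases (le_max_of_le_left (V.abs_nonneg x) : 0 ≤ max (V.abs x) (V.abs y)).eq_or_lt with h | h
  · have hy : y = V.zero :=
      (V.abs_eq_zero_iff y).1 ((h ▸ le_max_right _ _).antisymm (V.abs_nonneg y))
    exact ⟨x, by rw [hy, V.add_zero]; rfl⟩
  · rcases V.rho_ball x y with ⟨w, hw⟩ | ⟨w, hw⟩ <;>
      refine ⟨w, ?_⟩ <;> rw [hw] <;>
      simp only [Set.mem_ofPred_eq, V.dist_self] <;> positivity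

lemma dist_pos (hρ : 0 < V.rho) {x y : V.carrier} (h : x ≠ y) : 0 < V.dist x y := by
  obtain ⟨z, hz⟩ := V.add_nonempty hρ x (V.neg y)
  rw [V.dist_eq x y z h hz]
  refine V.abs_pos fun hz0 => h ?_
  rw [hz0] at hz
  rw [← V.neg_neg' x, ← V.neg_unique x (V.neg y) hz, V.neg_neg']

lemma dist_nonneg (hρ : 0 < V.rho) (x y : V.carrier) : 0 ≤ V.dist x y := by
  rcases eq_or_ne x y with rfl | h
  · rw [V.dist_self]
  · exact (V.dist_pos hρ h).le

lemma dist_le_max (hρ : 0 < V.rho) (a b c : V.carrier) :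
    V.dist a b ≤ max (V.dist a c) (V.dist c b) := by
  rcases eq_or_ne a b with rfl | hab
  · rw [V.dist_self]
    exact le_max_of_le_left (V.dist_nonneg hρ a c)
  rcases eq_or_ne a c with rfl | hac
  · exact le_max_right _ _
  rcases eq_or_ne c b with rfl | hcb
  · exact le_max_left _ _
  obtain ⟨u, hu⟩ := V.add_nonempty hρ a (V.neg c)
  obtain ⟨v, hv⟩ := V.add_nonempty hρ c (V.neg b)
  have hmem : a ∈ ⋃ t ∈ V.add u v, V.add t b := by
    rw [V.add_assoc u v b]
    exact Set.mem_biUnion ((V.reverse v c b).1 hv) ((V.reverse u a c).1 hu)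
  obtain ⟨t, ht, hat⟩ := Set.mem_iUnion₂.1 hmem
  rw [V.dist_eq a b t hab ((V.reverse t a b).2 hat), V.dist_eq a c u hac hu,
    V.dist_eq c b v hcb hv]
  exact V.abs_add_le u v t ht

lemma mul_mem_add_neg_self {s : V.carrier} (hs : s ∈ V.add V.one (V.neg V.one))
    (x : V.carrier) : V.mul s x ∈ V.add x (V.neg x) := by
  have h := V.distrib V.one (V.neg V.one) x ⟨s, hs, rfl⟩
  rwa [V.one_mul', V.neg_one_mul] at h

lemma mul_mem_one_add_neg_one {x x' u : V.carrier} (hx' : V.mul x x' = V.one)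
    (hu : u ∈ V.add x (V.neg x)) : V.mul u x' ∈ V.add V.one (V.neg V.one) := by
  have h := V.distrib x (V.neg x) x' ⟨u, hu, rfl⟩
  rwa [hx', ← V.neg_one_mul x, V.mul_assoc, hx', V.mul_one] at h

lemma add_eq_singleton_of_forall_add_neg_self_subset
    (h : ∀ y, V.add y (V.neg y) ⊆ {V.zero}) {x y w : V.carrier} (hw : w ∈ V.add x y) :
    V.add x y = {w} := by
  refine Set.eq_singleton_iff_unique_mem.2 ⟨hw, fun z hz => ?_⟩
  have hmem : z ∈ ⋃ t ∈ V.add w (V.neg y), V.add t y :=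
    Set.mem_biUnion ((V.reverse x w y).2 hw) hz
  rw [V.add_assoc] at hmem
  obtain ⟨t, ht, hzt⟩ := Set.mem_iUnion₂.1 hmem
  rw [V.add_comm] at ht
  rwa [h y ht, V.add_zero] at hzt

lemma exists_ne_zero_mem_one_add_neg_one (hρ : 0 < V.rho) :
    ∃ z ∈ V.add V.one (V.neg V.one), z ≠ V.zero := by
  by_contra! hS
  have hP : ∀ y, V.add y (V.neg y) ⊆ {V.zero} := by
    intro y u hu
    rcases eq_or_ne y V.zero with rfl | hy
    · rwa [V.neg_zero', V.add_zero] at hu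
    obtain ⟨y', hy', hy'abs⟩ := V.exists_mul_eq_one hy
    have h := congrArg V.abs (hS _ (V.mul_mem_one_add_neg_one hy' hu))
    rw [V.abs_mul, V.abs_zero, hy'abs, mul_eq_zero, inv_eq_zero, V.abs_eq_zero_iff,
      V.abs_eq_zero_iff] at h
    exact h.resolve_right hy
  suffices V.rho ≤ 0 by linarith
  refine V.rho_min 0 le_rfl fun x y => Or.inl ?_
  obtain ⟨w, hw⟩ := V.add_nonempty hρ x y
  refine ⟨w, ?_⟩
  rw [V.add_eq_singleton_of_forall_add_neg_self_subset hP hw, zero_mul]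
  ext z
  simp only [Set.mem_singleton_iff, Set.mem_ofPred_eq]
  refine ⟨fun hzw => hzw ▸ (V.dist_self z).le, fun hzw => ?_⟩
  by_contra hne
  exact (V.dist_pos hρ hne).not_ge hzw

variable {θ : ℝ}

/-- Scaling `x` by a power of `θ` into the annulus `θ < |z| ≤ 1` forces `|z| = 1`. -/
lemma exists_zpow_eq_abs (hθ : V.IsTheta θ) {x : V.carrier} (hx : x ≠ V.zero) :
    ∃ n : ℤ, V.abs x = θ ^ n := by
  have hθ0 := hθ.pos
  obtain ⟨⟨π, hπ, hπθ⟩, hθ1, hθmax⟩ := hθ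
  obtain ⟨m, hm, hm'⟩ := exists_mem_Ioc_zpow (V.abs_pos hx) ((one_lt_inv₀ hθ0).2 hθ1)
  obtain ⟨y, hy⟩ := V.exists_abs_eq_zpow hπ (m + 1)
  rw [hπθ] at hy
  have hz : V.abs (V.mul x y) = V.abs x * θ ^ (m + 1) := by rw [V.abs_mul, hy]
  have hpos : 0 < θ ^ (m + 1) := zpow_pos hθ0 _
  have hz1 : V.abs (V.mul x y) ≤ 1 := by
    rw [hz, ← le_div_iff₀ hpos, one_div, ← inv_zpow]
    exact hm'
  have hzθ : θ < V.abs (V.mul x y) := by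
    rw [hz, ← div_lt_iff₀ hpos, zpow_add_one₀ hθ0.ne', div_mul_cancel_right₀ hθ0.ne',
      ← inv_zpow]
    exact hm
  have hz0 : V.mul x y ≠ V.zero := fun h => by
    rw [h, V.abs_zero] at hzθ
    exact hθ0.not_gt hzθ
  have hz1' : V.abs (V.mul x y) = 1 :=
    hz1.eq_of_not_lt fun h => (hθmax _ hz0 h).not_gt hzθ
  refine ⟨-(m + 1), ?_⟩
  rw [hz1'] at hz
  rw [zpow_neg]
  exact eq_inv_of_mul_eq_one_left hz.symm

lemma exists_pow_eq_abs (hθ : V.IsTheta θ) {x : V.carrier} (hx : x ≠ V.zero)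
    (hx1 : V.abs x ≤ 1) : ∃ k : ℕ, V.abs x = θ ^ k := by
  obtain ⟨n, hn⟩ := V.exists_zpow_eq_abs hθ hx
  have hn0 : 0 ≤ n := (zpow_le_one_iff_right_of_lt_one₀ hθ.pos hθ.2.1).1 (hn ▸ hx1)
  lift n to ℕ using hn0
  exact ⟨n, by rw [hn, zpow_natCast]⟩

lemma abs_le_one_of_mem_one_add_neg_one {z : V.carrier}
    (hz : z ∈ V.add V.one (V.neg V.one)) : V.abs z ≤ 1 := by
  simpa only [V.abs_neg, V.abs_one, max_self] using V.abs_add_le _ _ _ hz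

lemma exists_isGreatest_abs_one_add_neg_one (hρ : 0 < V.rho) (hθ : V.IsTheta θ) :
    ∃ σ, 0 < σ ∧ IsGreatest (V.abs '' V.add V.one (V.neg V.one)) σ := by
  classical
  have hex : ∃ k : ℕ, θ ^ k ∈ V.abs '' V.add V.one (V.neg V.one) := by
    obtain ⟨z, hz, hz0⟩ := V.exists_ne_zero_mem_one_add_neg_one hρ
    obtain ⟨k, hk⟩ := V.exists_pow_eq_abs hθ hz0 (V.abs_le_one_of_mem_one_add_neg_one hz)
    exact ⟨k, z, hz, hk⟩
  refine ⟨θ ^ Nat.find hex, pow_pos hθ.pos _, Nat.find_spec hex, ?_⟩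
  rintro _ ⟨z, hz, rfl⟩
  rcases eq_or_ne z V.zero with rfl | hz0
  · rw [V.abs_zero]
    exact (pow_pos hθ.pos _).le
  obtain ⟨k, hk⟩ := V.exists_pow_eq_abs hθ hz0 (V.abs_le_one_of_mem_one_add_neg_one hz)
  rw [hk]
  exact pow_le_pow_of_le_one hθ.pos.le hθ.2.1.le (Nat.find_min' hex ⟨z, hz, hk⟩)

lemma max_dist_abs (hρ : 0 < V.rho) (z w : V.carrier) :
    max (V.dist z w) (V.abs w) = max (V.abs z) (V.abs w) := by
  have h₁ := V.dist_le_max hρ z w V.zero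
  have h₂ := V.dist_le_max hρ z V.zero w
  rw [V.dist_zero_right, V.dist_zero_left] at h₁
  rw [V.dist_zero_right, V.dist_zero_right] at h₂
  exact le_antisymm (max_le h₁ (le_max_right _ _)) (max_le h₂ (le_max_right _ _))

/-- By `max_dist_abs`, the ball `1 + (-1)`, which contains `0`, is also centred at `0`. -/
lemma one_add_neg_one_eq (hρ : 0 < V.rho) {σ : ℝ}
    (hσ : IsGreatest (V.abs '' V.add V.one (V.neg V.one)) σ) :
    V.add V.one (V.neg V.one) = {z | V.abs z ≤ σ} := by
  refine Set.Subset.antisymm (fun z hz => hσ.2 ⟨z, hz, rfl⟩) fun z hz => ?_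
  obtain ⟨s, hs, hsσ⟩ := hσ.1
  have hzs : ∀ w, V.dist z w ≤ max (V.dist s w) (V.abs w) := fun w => calc
    V.dist z w ≤ max (V.dist z w) (V.abs w) := le_max_left _ _
    _ = max (V.abs z) (V.abs w) := V.max_dist_abs hρ z w
    _ ≤ max (V.abs s) (V.abs w) := max_le_max_right _ (hsσ ▸ hz)
    _ = max (V.dist s w) (V.abs w) := (V.max_dist_abs hρ s w).symm
  have h0 := V.neg_mem V.one
  rcases V.rho_ball V.one (V.neg V.one) with ⟨w, hw⟩ | ⟨w, hw⟩ <;>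
    rw [V.abs_one, V.abs_neg_one, max_self, _root_.mul_one] at hw <;>
    rw [hw] at h0 hs ⊢ <;> simp only [Set.mem_ofPred_eq, V.dist_zero_left] at h0 hs ⊢
  · exact (hzs w).trans (max_le hs h0)
  · exact (hzs w).trans_lt (max_lt hs h0)

lemma add_neg_self_eq {σ : ℝ} (hS : V.add V.one (V.neg V.one) = {z | V.abs z ≤ σ})
    (x : V.carrier) : V.add x (V.neg x) = {z | V.abs z ≤ σ * V.abs x} := by
  ext z
  rw [Set.mem_ofPred_eq]
  rcases eq_or_ne x V.zero with rfl | hx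
  · rw [V.neg_zero', V.add_zero, V.abs_zero, mul_zero, Set.mem_singleton_iff,
      ← V.abs_eq_zero_iff]
    exact ⟨fun h => h.le, fun h => h.antisymm (V.abs_nonneg z)⟩
  obtain ⟨x', hx', hx'abs⟩ := V.exists_mul_eq_one hx
  have hzx : V.mul (V.mul z x') x = z := by rw [V.mul_assoc, V.mul_comm x', hx', V.mul_one]
  have hmem : V.mul z x' ∈ V.add V.one (V.neg V.one) ↔ V.abs z ≤ σ * V.abs x := by
    rw [hS, Set.mem_ofPred_eq, V.abs_mul, hx'abs, ← div_eq_mul_inv, div_le_iff₀ (V.abs_pos hx)]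
  refine ⟨fun hz => hmem.1 (V.mul_mem_one_add_neg_one hx' hz), fun hz => ?_⟩
  rw [← hzx]
  exact V.mul_mem_add_neg_self (hmem.2 hz) x

lemma add_neg_self_subset_iff (hρ : 0 < V.rho) (hθ : V.IsTheta θ) (x y : V.carrier) :
    V.add x (V.neg x) ⊆ V.add y (V.neg y) ↔ V.abs x ≤ V.abs y := by
  obtain ⟨σ, hσ0, hσ⟩ := V.exists_isGreatest_abs_one_add_neg_one hρ hθ
  have hS := V.one_add_neg_one_eq hρ hσ
  rw [V.add_neg_self_eq hS, V.add_neg_self_eq hS]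
  refine ⟨fun h => ?_, fun h z hz => hz.trans (mul_le_mul_of_nonneg_left h hσ0.le)⟩
  obtain ⟨s, hs, hsσ⟩ := hσ.1
  have hsx : V.abs (V.mul s x) ≤ σ * V.abs x := by rw [V.abs_mul, hsσ]
  have hsy : V.abs (V.mul s x) ≤ σ * V.abs y := h hsx
  rw [V.abs_mul, hsσ] at hsy
  exact le_of_mul_le_mul_left hsy hσ0

end ValuedHyperfield

lemma Real.zpow_rpow_log_div_log {a b : ℝ} (ha : 0 < a) (ha1 : a ≠ 1) (hb : 0 < b) (n : ℤ) :
    (a ^ n) ^ (Real.log b / Real.log a) = b ^ n := by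
  have hlog : Real.log a ≠ 0 := Real.log_ne_zero_of_pos_of_ne_one ha ha1
  rw [Real.rpow_def_of_pos (zpow_pos ha n), Real.log_zpow, mul_assoc,
    mul_div_cancel₀ _ hlog, ← Real.log_zpow, Real.exp_log (zpow_pos hb n)]

namespace IsHyperfieldIso

variable {V W : ValuedHyperfield} {f : V.carrier → W.carrier}

lemma map_one (hf : IsHyperfieldIso V W f) : f V.one = W.one := by
  obtain ⟨x, hx⟩ := hf.1.2 W.one
  rw [← W.one_mul' (f V.one), ← hx, ← hf.2.1, V.mul_one]

lemma map_zero (hf : IsHyperfieldIso V W f) : f V.zero = W.zero := by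
  obtain ⟨x, hx⟩ := hf.1.2 W.zero
  rw [← V.mul_zero' x, hf.2.1, hx, W.mul_comm, W.mul_zero']

lemma map_neg (hf : IsHyperfieldIso V W f) (x : V.carrier) : f (V.neg x) = W.neg (f x) := by
  have h := Set.mem_image_of_mem f (V.neg_mem x)
  rw [hf.2.2, hf.map_zero] at h
  exact W.neg_unique _ _ h

lemma image_add_neg_self (hf : IsHyperfieldIso V W f) (x : V.carrier) :
    f '' V.add x (V.neg x) = W.add (f x) (W.neg (f x)) := by
  rw [hf.2.2, hf.map_neg]

variable {θ θ' : ℝ}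

lemma abs_le_abs_iff (hf : IsHyperfieldIso V W f) (hρV : 0 < V.rho) (hρW : 0 < W.rho)
    (hθ : V.IsTheta θ) (hθ' : W.IsTheta θ') (x y : V.carrier) :
    W.abs (f x) ≤ W.abs (f y) ↔ V.abs x ≤ V.abs y := by
  rw [← W.add_neg_self_subset_iff hρW hθ', ← V.add_neg_self_subset_iff hρV hθ,
    ← hf.image_add_neg_self, ← hf.image_add_neg_self, Set.image_subset_image_iff hf.1.1]

lemma abs_lt_abs_iff (hf : IsHyperfieldIso V W f) (hρV : 0 < V.rho) (hρW : 0 < W.rho)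
    (hθ : V.IsTheta θ) (hθ' : W.IsTheta θ') (x y : V.carrier) :
    W.abs (f x) < W.abs (f y) ↔ V.abs x < V.abs y := by
  rw [← not_le, ← not_le, hf.abs_le_abs_iff hρV hρW hθ hθ']

lemma abs_map_eq_of_abs_eq (hf : IsHyperfieldIso V W f) (hρV : 0 < V.rho) (hρW : 0 < W.rho)
    (hθ : V.IsTheta θ) (hθ' : W.IsTheta θ') {x y : V.carrier} (h : V.abs x = V.abs y) :
    W.abs (f x) = W.abs (f y) :=
  le_antisymm ((hf.abs_le_abs_iff hρV hρW hθ hθ' x y).2 h.le)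
    ((hf.abs_le_abs_iff hρV hρW hθ hθ' y x).2 h.ge)

lemma abs_map_of_abs_eq_theta (hf : IsHyperfieldIso V W f) (hρV : 0 < V.rho)
    (hρW : 0 < W.rho) (hθ : V.IsTheta θ) (hθ' : W.IsTheta θ') {π : V.carrier}
    (hπ : V.abs π = θ) : W.abs (f π) = θ' := by
  have hlt := hf.abs_lt_abs_iff hρV hρW hθ hθ'
  have hle := hf.abs_le_abs_iff hρV hρW hθ hθ'
  have hπ0 : π ≠ V.zero := fun h => by
    rw [h, V.abs_zero] at hπ
    exact hθ.pos.ne hπ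
  refine le_antisymm (hθ'.2.2 _ (fun h => hπ0 (hf.1.1 (h.trans hf.map_zero.symm))) ?_) ?_
  · rw [← W.abs_one, ← hf.map_one, hlt, hπ, V.abs_one]
    exact hθ.2.1
  · obtain ⟨w, hw0, hwθ⟩ := hθ'.1
    obtain ⟨u, rfl⟩ := hf.1.2 w
    have hu0 : u ≠ V.zero := fun h => hw0 (by rw [h, hf.map_zero])
    have hu1 : V.abs u < 1 := by
      rw [← V.abs_one, ← hlt, hf.map_one, W.abs_one, hwθ]
      exact hθ'.2.1
    rw [← hwθ, hle, hπ]
    exact hθ.2.2 u hu0 hu1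

lemma abs_map_of_abs_eq_zpow (hf : IsHyperfieldIso V W f) (hρV : 0 < V.rho)
    (hρW : 0 < W.rho) (hθ : V.IsTheta θ) (hθ' : W.IsTheta θ') (n : ℤ) {x : V.carrier}
    (hx : V.abs x = θ ^ n) : W.abs (f x) = θ' ^ n := by
  obtain ⟨π, hπ0, hπ⟩ := hθ.1
  have hfπ := hf.abs_map_of_abs_eq_theta hρV hρW hθ hθ' hπ
  have heq : ∀ {x y : V.carrier}, V.abs x = V.abs y → W.abs (f x) = W.abs (f y) :=
    hf.abs_map_eq_of_abs_eq hρV hρW hθ hθ'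
  induction n using Int.induction_on generalizing x with
  | zero =>
    rw [zpow_zero, ← V.abs_one] at hx
    rw [heq hx, hf.map_one, W.abs_one, zpow_zero]
  | succ n ih =>
    obtain ⟨y, hy⟩ := V.exists_abs_eq_zpow hπ0 n
    rw [hπ] at hy
    have hxy : V.abs x = V.abs (V.mul y π) := by
      rw [hx, V.abs_mul, hy, hπ, zpow_add_one₀ hθ.pos.ne']
    rw [heq hxy, hf.2.1, W.abs_mul, ih hy, hfπ, zpow_add_one₀ hθ'.pos.ne']
  | pred n ih =>
    have hxπ : V.abs (V.mul x π) = θ ^ (-(n : ℤ)) := by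
      rw [V.abs_mul, hx, hπ, zpow_sub_one₀ hθ.pos.ne', inv_mul_cancel_right₀ hθ.pos.ne']
    have h := ih hxπ
    rw [hf.2.1, W.abs_mul, hfπ] at h
    rw [zpow_sub_one₀ hθ'.pos.ne', ← h, mul_inv_cancel_right₀ hθ'.pos.ne']

end IsHyperfieldIso

theorem stmt12_general (V W : ValuedHyperfield)
    (hρV : 0 < V.rho) (hρW : 0 < W.rho)
    (θ θ' : ℝ) (hθ : V.IsTheta θ) (hθ' : W.IsTheta θ')
    (f : V.carrier → W.carrier) (hf : IsHyperfieldIso V W f) :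
    (∀ x : V.carrier, W.abs (f x) = V.abs x ^ (Real.log θ' / Real.log θ)) ∧
    (∀ π : V.carrier, V.abs π = θ → W.abs (f π) = θ') := by
  refine ⟨fun x => ?_, fun π => hf.abs_map_of_abs_eq_theta hρV hρW hθ hθ'⟩
  rcases eq_or_ne x V.zero with rfl | hx
  · have hlog : Real.log θ' / Real.log θ ≠ 0 :=
      div_ne_zero (Real.log_neg hθ'.pos hθ'.2.1).ne (Real.log_neg hθ.pos hθ.2.1).ne
    rw [hf.map_zero, W.abs_zero, V.abs_zero, Real.zero_rpow hlog]
  · obtain ⟨n, hn⟩ := V.exists_zpow_eq_abs hθ hx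
    rw [hf.abs_map_of_abs_eq_zpow hρV hρW hθ hθ' n hn, hn,
      Real.zpow_rpow_log_div_log hθ.pos hθ.2.1.ne hθ'.pos]

theorem stmt12 (V W : ValuedHyperfield)
    (hdiscV : V.Discrete) (hdiscW : W.Discrete)
    (hvalV : ∃ x : V.carrier, V.abs x ≠ 0 ∧ V.abs x ≠ 1)
    (hvalW : ∃ x : W.carrier, W.abs x ≠ 0 ∧ W.abs x ≠ 1)
    (hρV : 0 < V.rho) (hρW : 0 < W.rho)
    (θ θ' : ℝ) (hθ : V.IsTheta θ) (hθ' : W.IsTheta θ')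
    (f : V.carrier → W.carrier) (hf : IsHyperfieldIso V W f) :
    (∀ x : V.carrier, W.abs (f x) = V.abs x ^ (Real.log θ' / Real.log θ)) ∧
    (∀ π : V.carrier, V.abs π = θ → W.abs (f π) = θ') :=
  stmt12_general V W hρV hρW θ θ' hθ hθ' f hf
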